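/- arXiv:1410.1289 — 5 statements merged into one kernel-verified Lean document; each statement's English description precedes it below -/
import Mathlib

section
/- The MIMO capacity function C(S) = log det(I + (P/N_t) · H_S H_S†), where H_S is the submatrix of H consisting of the rows indexed by S, is a monotone set function: for any subset S of row indices and any row index a ∉ S, C(S ∪ {a}) ≥ C(S). -/
open Matrix

/-- Submatrix of `H` keeping the rows indexed by the finite set `S`. -/
noncomputable def rowSub {m n : ℕ} (H : Matrix (Fin m) (Fin n) ℂ) (S : Finset (Fin m)) :
    Matrix S (Fin n) ℂ := fun i j => H i.1 j

/-- MIMO capacity `C(S) = log det (I + c • H_S H_S†)`. -/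
noncomputable def Cap {m n : ℕ} (c : ℝ) (H : Matrix (Fin m) (Fin n) ℂ) (S : Finset (Fin m)) : ℝ :=
  Real.log (((1 + (c : ℂ) • (rowSub H S * (rowSub H S)ᴴ)).det).re)

/-!
Sylvester's identity `det (1 + A B) = det (1 + B A)` moves the capacity to the transmit side,
`C(S) = log det (1 + c H_Sᴴ H_S)`, where the Gram matrix `H_Sᴴ H_S` is additive over disjoint row
sets. Enlarging `S` therefore adds a positive semidefinite `Xᴴ X` to the positive definite
`A = 1 + c H_Sᴴ H_S`, and `det (A + Xᴴ X) = det A · det (1 + X A⁻¹ Xᴴ)` with the last factor a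
product of eigenvalues `1 + λᵢ ≥ 1`.
-/

open scoped ComplexOrder

namespace Matrix

variable {𝕜 n : Type*} [RCLike 𝕜] [Fintype n] [DecidableEq n]

theorem PosSemidef.one_le_det_one_add {C : Matrix n n 𝕜} (hC : C.PosSemidef) :
    1 ≤ (1 + C).det := by
  set U := hC.isHermitian.eigenvectorUnitary
  have hdiag : 1 + C = Unitary.conjStarAlgAut 𝕜 _ U
      (diagonal fun i => ((1 + hC.isHermitian.eigenvalues i : ℝ) : 𝕜)) := by
    conv_lhs => rw [hC.isHermitian.spectral_theorem]
    rw [← map_one (Unitary.conjStarAlgAut 𝕜 _ U), ← map_add, ← diagonal_one, diagonal_add]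
    simp
  have hdet_conj (X : Matrix n n 𝕜) : (Unitary.conjStarAlgAut 𝕜 _ U X).det = X.det := by
    rw [Unitary.conjStarAlgAut_apply, det_mul, mul_comm, ← det_mul, ← mul_assoc,
      Unitary.coe_star_mul_self, one_mul]
  rw [hdiag, hdet_conj, det_diagonal, ← RCLike.ofReal_prod, ← RCLike.ofReal_one,
    RCLike.ofReal_le_ofReal]
  exact Finset.one_le_prod fun i _ => le_add_of_nonneg_right (hC.eigenvalues_nonneg i)

open scoped MatrixOrder in
theorem PosDef.det_le_det_add {A B : Matrix n n 𝕜} (hA : A.PosDef) (hB : B.PosSemidef) :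
    A.det ≤ (A + B).det := by
  obtain ⟨X, rfl⟩ := CStarAlgebra.nonneg_iff_eq_star_mul_self.mp hB.nonneg
  rw [star_eq_conjTranspose, det_add_mul _ _ hA.det_pos.ne'.isUnit]
  exact le_mul_of_one_le_right hA.det_pos.le
    (hA.inv.posSemidef.mul_mul_conjTranspose_same X).one_le_det_one_add

end Matrix

lemma rowSub_union_conjTranspose_mul_self {m n : ℕ} (H : Matrix (Fin m) (Fin n) ℂ)
    {S T : Finset (Fin m)} (hST : Disjoint S T) :
    (rowSub H (S ∪ T))ᴴ * rowSub H (S ∪ T) =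
      (rowSub H S)ᴴ * rowSub H S + (rowSub H T)ᴴ * rowSub H T := by
  ext j k
  simp only [mul_apply, Matrix.add_apply, conjTranspose_apply, rowSub]
  simp only [Finset.sum_coe_sort _ fun i => star (H i j) * H i k, Finset.sum_union hST]

lemma cap_eq_log_det_one_add_smul_conjTranspose_mul_self {m n : ℕ} (c : ℝ)
    (H : Matrix (Fin m) (Fin n) ℂ) (S : Finset (Fin m)) :
    Cap c H S = Real.log ((1 + (c : ℂ) • ((rowSub H S)ᴴ * rowSub H S)).det.re) := by
  rw [Cap, ← smul_mul, det_one_add_mul_comm, Matrix.mul_smul]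

lemma cap_mono {m n : ℕ} {c : ℝ} (hc : 0 ≤ c) (H : Matrix (Fin m) (Fin n) ℂ)
    {S T : Finset (Fin m)} (hST : S ⊆ T) : Cap c H S ≤ Cap c H T := by
  have hgram (U : Finset (Fin m)) : ((c : ℂ) • ((rowSub H U)ᴴ * rowSub H U)).PosSemidef :=
    (posSemidef_conjTranspose_mul_self _).smul (Complex.zero_le_real.mpr hc)
  have hpos : (1 + (c : ℂ) • ((rowSub H S)ᴴ * rowSub H S)).PosDef :=
    PosDef.one.add_posSemidef (hgram S)
  have hdet := hpos.det_le_det_add (hgram (T \ S))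
  rw [add_assoc, ← smul_add, ← rowSub_union_conjTranspose_mul_self H Finset.disjoint_sdiff,
    Finset.union_sdiff_of_subset hST] at hdet
  rw [cap_eq_log_det_one_add_smul_conjTranspose_mul_self,
    cap_eq_log_det_one_add_smul_conjTranspose_mul_self]
  exact Real.log_le_log (Complex.pos_iff.mp hpos.det_pos).1 (Complex.le_def.mp hdet).1

theorem cap_monotone_general {Nr Nt : ℕ} (H : Matrix (Fin Nr) (Fin Nt) ℂ)
    (P : ℝ) (hP : 0 < P) (S : Finset (Fin Nr)) (a : Fin Nr) :
    Cap (P / Nt) H S ≤ Cap (P / Nt) H (insert a S) :=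
  cap_mono (div_nonneg hP.le (Nat.cast_nonneg Nt)) H (Finset.subset_insert a S)

/-- The MIMO capacity function is a monotone set function. -/
theorem cap_monotone {Nr Nt : ℕ} (hNt : 0 < Nt) (H : Matrix (Fin Nr) (Fin Nt) ℂ)
    (P : ℝ) (hP : 0 < P) (S : Finset (Fin Nr)) (a : Fin Nr) (ha : a ∉ S) :
    Cap (P / Nt) H S ≤ Cap (P / Nt) H (insert a S) :=
  cap_monotone_general H P hP S a
end

section
/- For a nonnegative, monotone, submodular set function f on a finite ground set with a matroid constraint M, the set S produced by the greedy algorithm (repeatedly adding the feasible element giving the largest marginal increase) satisfies f(S) ≥ (1/2) · max{ f(T) : T independent in M }. -/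
/-!
Write `S₀ ⊆ S₁ ⊆ ⋯ ⊆ Sₙ = S` for the prefixes of the greedy run and `gₖ = f Sₖ₊₁ - f Sₖ` for its
gains. By augmentation, at most `k` elements of an independent set `T` cannot be added to `Sₖ`, so
Hall's theorem assigns injectively to each `a ∈ T \ S` an index `φ a < n` with `S_{φ a} ∪ {a}`
independent. Submodularity and the greedy choice at step `φ a` give `f (S ∪ {a}) - f S ≤ g_{φ a}`,
hence `f T ≤ f (S ∪ T) ≤ f S + ∑_{a ∈ T \ S} g_{φ a} ≤ f S + ∑ₖ gₖ = 2 f S - f ∅`.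
-/

open Finset Function

def GreedyRun {U : Type*} [DecidableEq U] (f : Finset U → ℝ) (Indep : Finset U → Prop)
    (l : List U) : Prop :=
  l.Nodup ∧
  (∀ k (hk : k < l.length),
      Indep (insert (l.get ⟨k, hk⟩) (l.take k).toFinset) ∧
      ∀ a ∉ (l.take k).toFinset, Indep (insert a (l.take k).toFinset) →
        f (insert a (l.take k).toFinset) ≤ f (insert (l.get ⟨k, hk⟩) (l.take k).toFinset)) ∧
  (∀ a ∉ l.toFinset, ¬ Indep (insert a l.toFinset))

theorem exists_injective_le_of_card_le {ι : Type*} (d : ι → ℕ)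
    (h : ∀ (s : Finset ι) (k : ℕ), (∀ i ∈ s, d i < k) → #s ≤ k) :
    ∃ φ : ι → ℕ, Injective φ ∧ ∀ i, φ i ≤ d i := by
  obtain ⟨φ, hφ, hφd⟩ :=
    (all_card_le_biUnion_card_iff_exists_injective fun i => range (d i + 1)).1 fun s =>
      h s _ fun i hi => by
        simpa using card_le_card (subset_biUnion_of_mem (fun i => range (d i + 1)) hi)
  exact ⟨φ, hφ, fun i => Nat.lt_succ_iff.1 (mem_range.1 (hφd i))⟩

theorem Fintype.sum_comp_le_sum_of_injective {ι κ M : Type*} [Fintype ι] [Fintype κ]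
    [AddCommMonoid M] [PartialOrder M] [AddLeftMono M] {φ : ι → κ} (hφ : Injective φ)
    {g : κ → M} (hg : ∀ j, 0 ≤ g j) : ∑ i, g (φ i) ≤ ∑ j, g j := by
  simpa using sum_le_univ_sum_of_nonneg (s := univ.map ⟨φ, hφ⟩) fun j => hg j

theorem le_add_sum_marginal {U : Type*} [DecidableEq U] {f : Finset U → ℝ}
    (hsub : ∀ S T : Finset U, S ⊆ T → ∀ a ∉ T, f (insert a T) - f T ≤ f (insert a S) - f S)
    (S D : Finset U) (hSD : Disjoint S D) :
    f (S ∪ D) ≤ f S + ∑ a ∈ D, (f (insert a S) - f S) := by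
  induction D using Finset.induction_on with
  | empty => simp
  | @insert b D hb ih =>
    rw [disjoint_insert_right] at hSD
    have hbSD : b ∉ S ∪ D := by simp [hSD.1, hb]
    have := hsub S (S ∪ D) subset_union_left b hbSD
    rw [sum_insert hb, union_insert]
    linarith [ih hSD.2]

namespace List

variable {U : Type*} [DecidableEq U]

theorem toFinset_take_mono (l : List U) {j k : ℕ} (h : j ≤ k) :
    (l.take j).toFinset ⊆ (l.take k).toFinset := by
  intro x
  simpa using fun hx => (List.take_prefix_take_left h).subset hx

theorem toFinset_take_subset (l : List U) (k : ℕ) : (l.take k).toFinset ⊆ l.toFinset := by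
  intro x
  simpa using fun hx => List.take_subset k l hx

theorem toFinset_take_add_one (l : List U) {k : ℕ} (hk : k < l.length) :
    (l.take (k + 1)).toFinset = insert l[k] (l.take k).toFinset := by
  rw [← List.take_concat_get' l k hk, List.toFinset_append]
  ext
  simp [or_comm]

end List

section IndepSystem

variable {U : Type*} [DecidableEq U] {Indep : Finset U → Prop}

theorem exists_indep_subset_union_card_le
    (hexch : ∀ X Y : Finset U, Indep X → Indep Y → X.card < Y.card →
      ∃ e ∈ Y \ X, Indep (insert e X))
    {X Y : Finset U} (hX : Indep X) (hY : Indep Y) :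
    ∃ Z, Indep Z ∧ X ⊆ Z ∧ Z ⊆ X ∪ Y ∧ #Y ≤ #Z := by
  induction hm : #Y - #X generalizing X with
  | zero => exact ⟨X, hX, subset_rfl, subset_union_left, by omega⟩
  | succ m ih =>
    obtain ⟨e, he, hXe⟩ := hexch X Y hX hY (by omega)
    rw [mem_sdiff] at he
    obtain ⟨Z, hZ, hXZ, hZXY, hYZ⟩ := ih hXe (by rw [card_insert_of_notMem he.2]; omega)
    refine ⟨Z, hZ, (subset_insert e X).trans hXZ, hZXY.trans ?_, hYZ⟩
    rw [insert_union]
    exact insert_subset (mem_union_right X he.1) subset_rfl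

open scoped Classical in
theorem card_filter_not_indep_insert_le
    (hdown : ∀ S T : Finset U, S ⊆ T → Indep T → Indep S)
    (hexch : ∀ X Y : Finset U, Indep X → Indep Y → X.card < Y.card →
      ∃ e ∈ Y \ X, Indep (insert e X))
    {X Y : Finset U} (hX : Indep X) (hY : Indep Y) :
    #{a ∈ Y | ¬ Indep (insert a X)} ≤ #X := by
  obtain ⟨Z, hZ, hXZ, hZXY, hYZ⟩ := exists_indep_subset_union_card_le hexch hX hY
  have hZX : Z \ X ⊆ {a ∈ Y | Indep (insert a X)} := by
    intro a ha
    rw [mem_sdiff] at ha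
    refine mem_filter.2 ⟨?_, hdown _ Z (insert_subset ha.1 hXZ) hZ⟩
    simpa [ha.2] using hZXY ha.1
  have := card_le_card hZX
  have := card_sdiff_add_card_eq_card hXZ
  have := card_filter_add_card_filter_not (s := Y) (fun a => Indep (insert a X))
  omega

theorem exists_injective_indep_insert_take
    (hdown : ∀ S T : Finset U, S ⊆ T → Indep T → Indep S)
    (hexch : ∀ X Y : Finset U, Indep X → Indep Y → X.card < Y.card →
      ∃ e ∈ Y \ X, Indep (insert e X))
    {l : List U} (hl : Indep l.toFinset) {D : Finset U} (hD : Indep D)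
    (hmax : ∀ a ∈ D, ¬ Indep (insert a l.toFinset)) :
    ∃ φ : D → Fin l.length, Injective φ ∧
      ∀ a : D, Indep (insert a.1 (l.take (φ a)).toFinset) := by
  classical
  let d : D → ℕ := fun a =>
    Nat.findGreatest (fun k => Indep (insert a.1 (l.take k).toFinset)) l.length
  have hd_spec (a : D) : Indep (insert a.1 (l.take (d a)).toFinset) :=
    Nat.findGreatest_spec (P := fun k => Indep (insert a.1 (l.take k).toFinset)) (Nat.zero_le _)
      (by simpa using hdown {a.1} D (singleton_subset_iff.2 a.2) hD)
  have hd_lt (a : D) : d a < l.length := by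
    refine (Nat.findGreatest_le _).lt_of_ne fun h => hmax a a.2 ?_
    simpa [show d a = l.length from h] using hd_spec a
  have hcount (s : Finset D) (k : ℕ) (hk : ∀ a ∈ s, d a < k) : #s ≤ k := by
    have hs :
        s.map (Embedding.subtype _) ⊆ {a ∈ D | ¬ Indep (insert a (l.take k).toFinset)} := by
      intro a ha
      obtain ⟨a, has, rfl⟩ := mem_map.1 ha
      refine mem_filter.2 ⟨a.2, fun hind => ?_⟩
      rcases le_or_gt k l.length with hkn | hkn
      · exact (hk a has).not_ge (Nat.le_findGreatest hkn hind)
      · exact hmax a a.2 (by simpa [List.take_of_length_le hkn.le] using hind)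
    calc #s = #(s.map (Embedding.subtype _)) := (card_map _).symm
      _ ≤ #{a ∈ D | ¬ Indep (insert a (l.take k).toFinset)} := card_le_card hs
      _ ≤ #(l.take k).toFinset :=
        card_filter_not_indep_insert_le hdown hexch (hdown _ _ (l.toFinset_take_subset k) hl) hD
      _ ≤ k := (List.toFinset_card_le _).trans (List.length_take_le _ _)
  obtain ⟨φ, hφ, hφd⟩ := exists_injective_le_of_card_le d hcount
  refine ⟨fun a => ⟨φ a, (hφd a).trans_lt (hd_lt a)⟩, fun a b h => hφ (Fin.val_eq_of_eq h),
    fun a => hdown _ _ ?_ (hd_spec a)⟩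
  exact insert_subset_insert _ (l.toFinset_take_mono (hφd a))

end IndepSystem

namespace GreedyRun

variable {U : Type*} [DecidableEq U] {f : Finset U → ℝ} {Indep : Finset U → Prop} {l : List U}

theorem indep_toFinset (hl : GreedyRun f Indep l) (hempty : Indep ∅) : Indep l.toFinset := by
  have : ∀ k ≤ l.length, Indep (l.take k).toFinset := by
    rintro (_ | k) hk
    · simpa using hempty
    · rw [l.toFinset_take_add_one hk]
      simpa using (hl.2.1 k hk).1
  simpa using this l.length le_rfl

theorem marginal_le_gain (hl : GreedyRun f Indep l)
    (hsub : ∀ S T : Finset U, S ⊆ T → ∀ a ∉ T, f (insert a T) - f T ≤ f (insert a S) - f S)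
    {k : ℕ} (hk : k < l.length) {a : U} (ha : a ∉ l.toFinset)
    (hind : Indep (insert a (l.take k).toFinset)) :
    f (insert a l.toFinset) - f l.toFinset
      ≤ f (l.take (k + 1)).toFinset - f (l.take k).toFinset := by
  have hgreedy := (hl.2.1 k hk).2 a (fun h => ha (l.toFinset_take_subset k h)) hind
  have := hsub _ _ (l.toFinset_take_subset k) a ha
  rw [l.toFinset_take_add_one hk]
  simp only [List.get_eq_getElem] at hgreedy
  linarith

end GreedyRun

theorem greedy_half_approx_general {U : Type*} [DecidableEq U]
    (f : Finset U → ℝ) (Indep : Finset U → Prop)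
    (hf0 : ∀ S, 0 ≤ f S)
    (hmono : ∀ S T : Finset U, S ⊆ T → f S ≤ f T)
    (hsub : ∀ S T : Finset U, S ⊆ T → ∀ a ∉ T,
      f (insert a T) - f T ≤ f (insert a S) - f S)
    (hempty : Indep ∅)
    (hdown : ∀ S T : Finset U, S ⊆ T → Indep T → Indep S)
    (hexch : ∀ X Y : Finset U, Indep X → Indep Y → X.card < Y.card →
      ∃ e ∈ Y \ X, Indep (insert e X))
    (l : List U) (hl : GreedyRun f Indep l) :
    ∀ T : Finset U, Indep T → f T ≤ 2 * f l.toFinset := by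
  intro T hT
  set S := l.toFinset
  let gain : ℕ → ℝ := fun i => f (l.take (i + 1)).toFinset - f (l.take i).toFinset
  obtain ⟨φ, hφ, hφ_indep⟩ := exists_injective_indep_insert_take hdown hexch
    (hl.indep_toFinset hempty) (hdown _ _ sdiff_subset hT) fun a ha => hl.2.2 a (mem_sdiff.1 ha).2
  calc f T ≤ f (S ∪ T \ S) := hmono _ _ (by simp)
    _ ≤ f S + ∑ a ∈ T \ S, (f (insert a S) - f S) := le_add_sum_marginal hsub _ _ disjoint_sdiff
    _ = f S + ∑ a : ↥(T \ S), (f (insert a.1 S) - f S) := by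
      congr 1
      exact (sum_coe_sort _ _).symm
    _ ≤ f S + ∑ a : ↥(T \ S), gain (φ a) := by
      gcongr with a
      exact hl.marginal_le_gain hsub (φ a).2 (mem_sdiff.1 a.2).2 (hφ_indep a)
    _ ≤ f S + ∑ i : Fin l.length, gain i :=
      add_le_add le_rfl (Fintype.sum_comp_le_sum_of_injective hφ (g := fun i => gain i) fun i =>
        sub_nonneg.2 (hmono _ _ (l.toFinset_take_mono (Nat.le_succ i))))
    _ = f S + (f S - f ∅) := by
      rw [Fin.sum_univ_eq_sum_range gain, sum_range_sub fun i => f (l.take i).toFinset]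
      simp [S]
    _ ≤ 2 * f S := by linarith [hf0 ∅]

/-- Fisher–Nemhauser–Wolsey (1978): for a nonnegative monotone submodular function and a
matroid constraint, greedy achieves at least half of the optimum. -/
theorem greedy_half_approx {U : Type*} [Fintype U] [DecidableEq U]
    (f : Finset U → ℝ) (Indep : Finset U → Prop)
    (hf0 : ∀ S, 0 ≤ f S)
    (hmono : ∀ S T : Finset U, S ⊆ T → f S ≤ f T)
    (hsub : ∀ S T : Finset U, S ⊆ T → ∀ a ∉ T,
      f (insert a T) - f T ≤ f (insert a S) - f S)
    (hempty : Indep ∅)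
    (hdown : ∀ S T : Finset U, S ⊆ T → Indep T → Indep S)
    (hexch : ∀ X Y : Finset U, Indep X → Indep Y → X.card < Y.card →
      ∃ e ∈ Y \ X, Indep (insert e X))
    (l : List U) (hl : GreedyRun f Indep l) :
    ∀ T : Finset U, Indep T → f T ≤ 2 * f l.toFinset :=
  greedy_half_approx_general f Indep hf0 hmono hsub hempty hdown hexch l hl
end

section
/- The waterfilling rate function R(S) = max{ Σ_{i∈S} log(1 + λ_i p_i) : p_i ≥ 0, Σ_{i∈S} p_i ≤ P } over a set S of parallel Gaussian channels is a submodular set function of S. -/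
/-!
Write `F_S(Q)` for the rate of `S` under budget `Q`. First, `F_S` is concave in `Q`: mixing two
allocations mixes their budgets, and each `log (1 + λ x)` is concave. Second, for `S ⊆ T` and
`y ≤ Q`, `F_S(Q) - F_S(y) ≤ F_T(Q) - F_T(y)`: given an allocation for `T` under budget `y`, spend
the extra `Q - y` on the channels of `S` alone and use concavity of `F_S`.
An allocation for `insert a T` giving power `x` to `a` is worth at most
`log (1 + λ_a x) + F_T(P - x)`, and by the second fact
`log (1 + λ_a x) + F_T(P - x) - F_T(P) ≤ log (1 + λ_a x) + F_S(P - x) - F_S(P)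
  ≤ F_{insert a S}(P) - F_S(P)`.
-/

noncomputable def Rate {n : ℕ} (lam : Fin n → ℝ) (Pw : ℝ) (S : Finset (Fin n)) : ℝ :=
  sSup { r : ℝ | ∃ p : Fin n → ℝ, (∀ i, 0 ≤ p i) ∧ (∑ i ∈ S, p i ≤ Pw) ∧
    r = ∑ i ∈ S, Real.log (1 + lam i * p i) }

open Finset Real

theorem ConcaveOn.add_le_add_of_mix {E : Type*} [AddCommGroup E] [Module ℝ E] {s : Set E}
    {g : E → ℝ} (hg : ConcaveOn ℝ s g) {x y : E} (hx : x ∈ s) (hy : y ∈ s) {t : ℝ}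
    (ht₀ : 0 ≤ t) (ht₁ : t ≤ 1) :
    g x + g y ≤ g ((1 - t) • x + t • y) + g (t • x + (1 - t) • y) := by
  have h₁ := hg.2 hx hy (sub_nonneg.2 ht₁) ht₀ (by ring)
  have h₂ := hg.2 hx hy ht₀ (sub_nonneg.2 ht₁) (by ring)
  simp only [smul_eq_mul] at h₁ h₂
  linarith

theorem concaveOn_log_one_add_mul {c : ℝ} (hc : 0 ≤ c) :
    ConcaveOn ℝ (Set.Ici 0) fun x => log (1 + c * x) := by
  refine ⟨convex_Ici 0, fun x hx y hy μ ν hμ hν hμν => ?_⟩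
  have hpos : ∀ z ∈ Set.Ici (0 : ℝ), 1 + c * z ∈ Set.Ioi 0 := fun z hz =>
    Set.mem_Ioi.2 (by nlinarith [Set.mem_Ici.1 hz])
  convert strictConcaveOn_log_Ioi.concaveOn.2 (hpos x hx) (hpos y hy) hμ hν hμν using 2
  simp only [smul_eq_mul]
  linear_combination -hμν

namespace Rate

variable {n : ℕ} {lam : Fin n → ℝ}

theorem bddAbove (hlam : ∀ i, 0 ≤ lam i) (Q : ℝ) (S : Finset (Fin n)) :
    BddAbove { r : ℝ | ∃ p : Fin n → ℝ, (∀ i, 0 ≤ p i) ∧ (∑ i ∈ S, p i ≤ Q) ∧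
      r = ∑ i ∈ S, log (1 + lam i * p i) } := by
  refine ⟨∑ i ∈ S, log (1 + lam i * Q), ?_⟩
  rintro r ⟨p, hp, hpS, rfl⟩
  refine sum_le_sum fun i hi => log_le_log (by nlinarith [hlam i, hp i]) ?_
  have hpi : p i ≤ Q := (single_le_sum (fun j _ => hp j) hi).trans hpS
  nlinarith [hlam i]

theorem sum_log_le (hlam : ∀ i, 0 ≤ lam i) {Q : ℝ} {S : Finset (Fin n)} {p : Fin n → ℝ}
    (hp : ∀ i, 0 ≤ p i) (hpS : ∑ i ∈ S, p i ≤ Q) :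
    ∑ i ∈ S, log (1 + lam i * p i) ≤ Rate lam Q S :=
  le_csSup (bddAbove hlam Q S) ⟨p, hp, hpS, rfl⟩

theorem le_of_forall_sum_log_le {Q : ℝ} (hQ : 0 ≤ Q) {S : Finset (Fin n)} {c : ℝ}
    (h : ∀ p : Fin n → ℝ, (∀ i, 0 ≤ p i) → ∑ i ∈ S, p i ≤ Q →
      ∑ i ∈ S, log (1 + lam i * p i) ≤ c) :
    Rate lam Q S ≤ c :=
  csSup_le ⟨0, fun _ => 0, fun _ => le_rfl, by simpa, by simp⟩ fun _ ⟨p, hp, hpS, hr⟩ =>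
    hr ▸ h p hp hpS

theorem add_le_of_forall_sum_log_le {Q₁ Q₂ : ℝ} (hQ₁ : 0 ≤ Q₁) (hQ₂ : 0 ≤ Q₂)
    {S₁ S₂ : Finset (Fin n)} {c : ℝ}
    (h : ∀ p q : Fin n → ℝ, (∀ i, 0 ≤ p i) → ∑ i ∈ S₁, p i ≤ Q₁ → (∀ i, 0 ≤ q i) →
      ∑ i ∈ S₂, q i ≤ Q₂ →
      ∑ i ∈ S₁, log (1 + lam i * p i) + ∑ i ∈ S₂, log (1 + lam i * q i) ≤ c) :
    Rate lam Q₁ S₁ + Rate lam Q₂ S₂ ≤ c := by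
  suffices Rate lam Q₁ S₁ ≤ c - Rate lam Q₂ S₂ by linarith
  refine le_of_forall_sum_log_le hQ₁ fun p hp hpS => ?_
  suffices Rate lam Q₂ S₂ ≤ c - ∑ i ∈ S₁, log (1 + lam i * p i) by linarith
  exact le_of_forall_sum_log_le hQ₂ fun q hq hqS => by linarith [h p q hp hpS hq hqS]

theorem add_le_add_of_mix (hlam : ∀ i, 0 ≤ lam i) (S : Finset (Fin n)) {Q₁ Q₂ t : ℝ}
    (hQ₁ : 0 ≤ Q₁) (hQ₂ : 0 ≤ Q₂) (ht₀ : 0 ≤ t) (ht₁ : t ≤ 1) :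
    Rate lam Q₁ S + Rate lam Q₂ S ≤
      Rate lam ((1 - t) * Q₁ + t * Q₂) S + Rate lam (t * Q₁ + (1 - t) * Q₂) S := by
  refine add_le_of_forall_sum_log_le hQ₁ hQ₂ fun p q hp hpS hq hqS => ?_
  have hmix_nonneg : ∀ {a b : ℝ}, 0 ≤ a → 0 ≤ b → ∀ i, 0 ≤ a * p i + b * q i :=
    fun ha hb i => by have := hp i; have := hq i; positivity
  have hmix_sum : ∀ a b : ℝ, ∑ i ∈ S, (a * p i + b * q i) = a * ∑ i ∈ S, p i + b * ∑ i ∈ S, q i :=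
    fun a b => by rw [sum_add_distrib, mul_sum, mul_sum]
  have hu := sum_log_le hlam (S := S) (Q := (1 - t) * Q₁ + t * Q₂)
    (hmix_nonneg (sub_nonneg.2 ht₁) ht₀) (by rw [hmix_sum]; gcongr)
  have hv := sum_log_le hlam (S := S) (Q := t * Q₁ + (1 - t) * Q₂)
    (hmix_nonneg ht₀ (sub_nonneg.2 ht₁)) (by rw [hmix_sum]; gcongr)
  have hpointwise : ∀ i ∈ S, log (1 + lam i * p i) + log (1 + lam i * q i) ≤
      log (1 + lam i * ((1 - t) * p i + t * q i)) + log (1 + lam i * (t * p i + (1 - t) * q i)) :=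
    fun i _ => (concaveOn_log_one_add_mul (hlam i)).add_le_add_of_mix (Set.mem_Ici.2 (hp i))
      (Set.mem_Ici.2 (hq i)) ht₀ ht₁
  have hsum := sum_le_sum hpointwise
  rw [sum_add_distrib, sum_add_distrib] at hsum
  linarith

theorem add_sub_le_add_sub (hlam : ∀ i, 0 ≤ lam i) (S : Finset (Fin n)) {s y Δ : ℝ}
    (hs : 0 ≤ s) (hsy : s ≤ y) (hΔ : 0 ≤ Δ) :
    Rate lam (y + Δ) S - Rate lam y S ≤ Rate lam (s + Δ) S - Rate lam s S := by
  rcases (add_nonneg (sub_nonneg.2 hsy) hΔ).eq_or_lt with hgap | hgap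
  · obtain rfl : Δ = 0 := by linarith
    simp
  -- `s + Δ` and `y` are the mixtures of `s` and `y + Δ` with weights `1 - t, t` and `t, 1 - t`.
  set t := Δ / (y - s + Δ)
  have ht : t * (y - s + Δ) = Δ := div_mul_cancel₀ _ hgap.ne'
  have ht₁ : t ≤ 1 := (div_le_one hgap).2 (by linarith)
  have hmix := add_le_add_of_mix hlam S hs (hs.trans (le_add_of_le_of_nonneg hsy hΔ))
    (div_nonneg hΔ hgap.le) ht₁
  rw [show (1 - t) * s + t * (y + Δ) = s + Δ by linear_combination ht,
    show t * s + (1 - t) * (y + Δ) = y by linear_combination -ht] at hmix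
  linarith

theorem sum_log_add_le_union (hlam : ∀ i, 0 ≤ lam i) {A B : Finset (Fin n)} (hAB : Disjoint A B)
    {p : Fin n → ℝ} (hp : ∀ i, 0 ≤ p i) {Q : ℝ} (hpA : ∑ i ∈ A, p i ≤ Q) :
    ∑ i ∈ A, log (1 + lam i * p i) + Rate lam (Q - ∑ i ∈ A, p i) B ≤ Rate lam Q (A ∪ B) := by
  suffices Rate lam (Q - ∑ i ∈ A, p i) B ≤ Rate lam Q (A ∪ B) - ∑ i ∈ A, log (1 + lam i * p i) by
    linarith
  refine le_of_forall_sum_log_le (sub_nonneg.2 hpA) fun q hq hqB => ?_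
  have hA : ∀ i ∈ A, A.piecewise p q i = p i := fun i hi => piecewise_eq_of_mem _ _ _ hi
  have hB : ∀ i ∈ B, A.piecewise p q i = q i :=
    fun i hi => piecewise_eq_of_notMem _ _ _ (disjoint_right.1 hAB hi)
  have hpq := sum_log_le hlam (S := A ∪ B) (Q := Q) (p := A.piecewise p q)
    (fun i => by by_cases hi : i ∈ A <;> simp [hi, hp i, hq i])
    (by rw [sum_union hAB, sum_congr rfl hA, sum_congr rfl hB]; linarith)
  have hlogA : ∑ i ∈ A, log (1 + lam i * A.piecewise p q i) = ∑ i ∈ A, log (1 + lam i * p i) :=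
    sum_congr rfl fun i hi => by rw [hA i hi]
  have hlogB : ∑ i ∈ B, log (1 + lam i * A.piecewise p q i) = ∑ i ∈ B, log (1 + lam i * q i) :=
    sum_congr rfl fun i hi => by rw [hB i hi]
  rw [sum_union hAB, hlogA, hlogB] at hpq
  linarith

theorem sub_le_sub_of_subset (hlam : ∀ i, 0 ≤ lam i) {S T : Finset (Fin n)} (hST : S ⊆ T)
    {y Q : ℝ} (hy : 0 ≤ y) (hyQ : y ≤ Q) :
    Rate lam Q S - Rate lam y S ≤ Rate lam Q T - Rate lam y T := by
  suffices Rate lam y T ≤ Rate lam Q T - (Rate lam Q S - Rate lam y S) by linarith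
  refine le_of_forall_sum_log_le hy fun p hp hpT => ?_
  have hsplit : ∑ i ∈ T \ S, p i + ∑ i ∈ S, p i = ∑ i ∈ T, p i := sum_sdiff hST
  have hS_nonneg : 0 ≤ ∑ i ∈ S, p i := sum_nonneg fun i _ => hp i
  have hTS_nonneg : 0 ≤ ∑ i ∈ T \ S, p i := sum_nonneg fun i _ => hp i
  -- Keep `p` on `T \ S` and give `S` the budget `y` minus what `T \ S` uses, plus `Q - y`.
  have hspliced := sum_log_add_le_union hlam disjoint_sdiff_self_left hp
    (Q := Q) (by linarith)
  rw [sdiff_union_of_subset hST] at hspliced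
  have hconcave := add_sub_le_add_sub hlam S (s := y - ∑ i ∈ T \ S, p i) (y := y) (Δ := Q - y)
    (by linarith) (by linarith) (sub_nonneg.2 hyQ)
  rw [show y - ∑ i ∈ T \ S, p i + (Q - y) = Q - ∑ i ∈ T \ S, p i by ring,
    add_sub_cancel] at hconcave
  have hS := sum_log_le hlam (S := S) (Q := y - ∑ i ∈ T \ S, p i) hp (by linarith)
  rw [← sum_sdiff hST]
  linarith

end Rate

/-- Waterfilling is submodular (Vaze): `R(S∪{a}) − R(S) ≥ R(T∪{a}) − R(T)` for
`S ⊆ T` and `a ∉ T`. -/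
theorem rate_submodular {n : ℕ} (lam : Fin n → ℝ) (hlam : ∀ i, 0 ≤ lam i)
    (Pw : ℝ) (hPw : 0 < Pw) (S T : Finset (Fin n)) (hST : S ⊆ T)
    (a : Fin n) (ha : a ∉ T) :
    Rate lam Pw (insert a T) - Rate lam Pw T ≤
      Rate lam Pw (insert a S) - Rate lam Pw S := by
  suffices Rate lam Pw (insert a T) ≤ Rate lam Pw T + (Rate lam Pw (insert a S) - Rate lam Pw S) by
    linarith
  refine Rate.le_of_forall_sum_log_le hPw.le fun p hp hpaT => ?_
  rw [sum_insert ha] at hpaT ⊢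
  have hT := Rate.sum_log_le hlam (S := T) (Q := Pw - p a) hp (by linarith)
  have hT_nonneg : 0 ≤ ∑ i ∈ T, p i := sum_nonneg fun i _ => hp i
  have hincrement := Rate.sub_le_sub_of_subset hlam hST (y := Pw - p a) (by linarith)
    (sub_le_self Pw (hp a))
  have haS := Rate.sum_log_add_le_union hlam (A := {a}) (B := S)
    (disjoint_singleton_left.2 fun h => ha (hST h)) hp (Q := Pw) (by rw [sum_singleton]; linarith)
  rw [sum_singleton, sum_singleton, ← insert_eq] at haS
  linarith
end

section
/- For positive semidefinite Hermitian matrices A and B with B − A positive semidefinite, and any vector h, the capacity increment satisfies log det(I + B + h h†) − log det(I + B) ≤ log det(I + A + h h†) − log det(I + A). Equivalently, log(1 + h†(I + B)⁻¹ h) ≤ log(1 + h†(I + A)⁻¹ h). -/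
open Matrix ComplexOrder

/-! By the matrix determinant lemma, both sides are `log (1 + h† (I + M)⁻¹ h)` for `M = B, A`.
Since `I + A ≤ I + B` in the Loewner order, operator antitonicity of the inverse (available for
matrices through their C⋆-algebra structure under the L2 operator norm) gives
`(I + B)⁻¹ ≤ (I + A)⁻¹`, and `log` is monotone. -/

namespace Matrix

variable {n : Type*} [Fintype n] [DecidableEq n]

theorem det_add_vecMulVec {R : Type*} [CommRing R] {M : Matrix n n R} (hM : IsUnit M.det)
    (u v : n → R) : (M + vecMulVec u v).det = M.det * (1 + v ⬝ᵥ (M⁻¹ *ᵥ u)) := by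
  rw [vecMulVec_eq Unit, det_add_replicateCol_mul_replicateRow hM, det_unique (1 + _), add_apply,
    one_apply_eq, ← replicateRow_vecMul, replicateRow_mul_replicateCol_apply,
    ← dotProduct_mulVec]

theorem PosDef.log_det_add_vecMulVec_sub_log_det {M : Matrix n n ℂ} (hM : M.PosDef)
    (h : n → ℂ) :
    Real.log (M + vecMulVec h (star h)).det.re - Real.log M.det.re =
      Real.log (1 + (star h ⬝ᵥ (M⁻¹ *ᵥ h)).re) := by
  obtain ⟨hdet_pos, hdet_im⟩ := Complex.pos_iff.mp hM.det_pos
  obtain ⟨hquad_nonneg, hquad_im⟩ :=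
    Complex.nonneg_iff.mp (hM.inv.posSemidef.dotProduct_mulVec_nonneg h)
  rw [det_add_vecMulVec hM.det_pos.ne'.isUnit h (star h), Complex.mul_re, Complex.add_im,
    Complex.one_im, ← hdet_im, ← hquad_im, zero_mul, sub_zero, Complex.add_re, Complex.one_re,
    Real.log_mul hdet_pos.ne' (by positivity), add_sub_cancel_left]

open scoped MatrixOrder Matrix.Norms.L2Operator in
theorem PosDef.inv_sub_inv_posSemidef {P Q : Matrix n n ℂ} (hP : P.PosDef)
    (hPQ : (Q - P).PosSemidef) : (P⁻¹ - Q⁻¹).PosSemidef := by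
  have hQ : Q.PosDef := by simpa using hP.add_posSemidef hPQ
  have hinv := CStarAlgebra.inv_le_inv (a := hP.isUnit.unit) (b := hQ.isUnit.unit)
    (nonneg_iff_posSemidef.mpr hP.posSemidef) hPQ
  simpa [coe_units_inv] using le_iff.mp hinv

theorem PosDef.dotProduct_inv_mulVec_antitone {P Q : Matrix n n ℂ} (hP : P.PosDef)
    (hPQ : (Q - P).PosSemidef) (h : n → ℂ) :
    star h ⬝ᵥ (Q⁻¹ *ᵥ h) ≤ star h ⬝ᵥ (P⁻¹ *ᵥ h) := by
  simpa [sub_mulVec, dotProduct_sub] using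
    (hP.inv_sub_inv_posSemidef hPQ).dotProduct_mulVec_nonneg h

end Matrix

/-- For Hermitian PSD matrices `A ⪯ B` and any vector `h`, the log-det increment from
adding the rank-one term `h h†` is smaller at `B` than at `A`:
`log det(I + B + h h†) − log det(I + B) ≤ log det(I + A + h h†) − log det(I + A)`. -/
theorem logdet_increment_antitone {n : ℕ} (A B : Matrix (Fin n) (Fin n) ℂ)
    (hA : A.PosSemidef) (hB : B.PosSemidef) (hBA : (B - A).PosSemidef)
    (h : Fin n → ℂ) :
    Real.log (((1 + B + vecMulVec h (star h)).det).re) - Real.log (((1 + B).det).re) ≤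
      Real.log (((1 + A + vecMulVec h (star h)).det).re) - Real.log (((1 + A).det).re) := by
  have hA₁ : (1 + A).PosDef := PosDef.one.add_posSemidef hA
  have hB₁ : (1 + B).PosDef := PosDef.one.add_posSemidef hB
  rw [hA₁.log_det_add_vecMulVec_sub_log_det, hB₁.log_det_add_vecMulVec_sub_log_det]
  have hquad : star h ⬝ᵥ ((1 + B)⁻¹ *ᵥ h) ≤ star h ⬝ᵥ ((1 + A)⁻¹ *ᵥ h) :=
    hA₁.dotProduct_inv_mulVec_antitone (by rwa [add_sub_add_left_eq_sub]) h
  have hquad_nonneg : 0 ≤ (star h ⬝ᵥ ((1 + B)⁻¹ *ᵥ h)).re :=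
    (Complex.nonneg_iff.mp (hB₁.inv.posSemidef.dotProduct_mulVec_nonneg h)).1
  gcongr
end

section
/- In one pipage-rounding step that moves a fractional vector y along the direction e_i − e_j (adding ε to coordinate i, subtracting ε from coordinate j), the multilinear extension F of a submodular function, viewed as a function φ(ε) = F(y + ε(e_i − e_j)), is convex in ε; hence its maximum over an interval is attained at an endpoint. -/
noncomputable def mlext {n : ℕ} (f : Finset (Fin n) → ℝ) (x : Fin n → ℝ) : ℝ :=
  ∑ A : Finset (Fin n), f A * ((∏ i ∈ A, x i) * ∏ j ∈ Aᶜ, (1 - x j))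

/-!
Along `e_i - e_j` only the coordinates `x_i = y_i + ε` and `x_j = y_j - ε` move, and `F` is affine
in each coordinate separately, so `φ(ε)` is the bilinear interpolation of the four values of `F`
with `(x_i, x_j)` set to the corners of the unit square. Its `ε²`-coefficient is
`F₁₀ + F₀₁ - F₁₁ - F₀₀`, which is the multilinear extension at `y` of a nonnegative function
by submodularity, hence nonnegative because `y ∈ [0,1]ⁿ`.
-/

open Finset Function

section

variable {n : ℕ}

lemma mlext_add (f g : Finset (Fin n) → ℝ) (x : Fin n → ℝ) :
    mlext (fun A => f A + g A) x = mlext f x + mlext g x := by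
  simp only [mlext, add_mul, sum_add_distrib]

lemma mlext_mono {f g : Finset (Fin n) → ℝ} (hfg : ∀ A, f A ≤ g A) {x : Fin n → ℝ}
    (hx : ∀ k, x k ∈ Set.Icc (0 : ℝ) 1) : mlext f x ≤ mlext g x := by
  refine sum_le_sum fun A _ => mul_le_mul_of_nonneg_right (hfg A) ?_
  exact mul_nonneg (prod_nonneg fun k _ => (hx k).1)
    (prod_nonneg fun k _ => sub_nonneg.2 (hx k).2)

lemma mlext_eq_sum_powerset_erase (f : Finset (Fin n) → ℝ) (x : Fin n → ℝ) (i : Fin n) :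
    mlext f x = ∑ A ∈ (univ.erase i).powerset,
      (∏ k ∈ A, x k) * (∏ k ∈ Aᶜ.erase i, (1 - x k)) *
        ((1 - x i) * f A + x i * f (insert i A)) := by
  rw [mlext, ← powerset_univ]
  nth_rewrite 1 [← insert_erase (mem_univ i)]
  rw [sum_powerset_insert (notMem_erase i univ), ← sum_add_distrib]
  refine sum_congr rfl fun A hA => ?_
  have hiA : i ∉ A := fun h => notMem_erase i univ (mem_powerset.1 hA h)
  rw [prod_insert hiA, compl_insert, ← mul_prod_erase _ _ (mem_compl.2 hiA)]
  ring

lemma mlext_update (f : Finset (Fin n) → ℝ) (x : Fin n → ℝ) (i : Fin n) (t : ℝ) :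
    mlext f (update x i t) =
      (1 - t) * mlext (fun A => f (A.erase i)) x + t * mlext (fun A => f (insert i A)) x := by
  simp only [mlext_eq_sum_powerset_erase _ _ i, mul_sum, ← sum_add_distrib]
  refine sum_congr rfl fun A hA => ?_
  have hiA : i ∉ A := fun h => notMem_erase i univ (mem_powerset.1 hA h)
  have hprod : ∏ k ∈ A, update x i t k = ∏ k ∈ A, x k :=
    prod_congr rfl fun k hk => update_of_ne (ne_of_mem_of_not_mem hk hiA) _ _
  have hAc : ∏ k ∈ Aᶜ.erase i, (1 - update x i t k) = ∏ k ∈ Aᶜ.erase i, (1 - x k) :=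
    prod_congr rfl fun k hk => by rw [update_of_ne (ne_of_mem_erase hk)]
  simp only [hprod, hAc, update_self, erase_insert hiA, erase_eq_of_notMem hiA, insert_idem]
  ring

lemma submodular_pair_le {f : Finset (Fin n) → ℝ}
    (hsub : ∀ A B : Finset (Fin n), A ⊆ B → ∀ a ∉ B,
      f (insert a B) - f B ≤ f (insert a A) - f A)
    {i j : Fin n} (hij : i ≠ j) (A : Finset (Fin n)) :
    f (insert j (insert i A)) + f ((A.erase i).erase j) ≤
      f ((insert i A).erase j) + f (insert j (A.erase i)) := by
  set C := (A.erase i).erase j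
  have h := hsub C (insert j C) (subset_insert j C) i (by simp [C, hij])
  have h1 : insert j (insert i A) = insert i (insert j C) := by ext; simp [C]; grind
  have h2 : (insert i A).erase j = insert i C := by ext; simp [C]; grind
  have h3 : insert j (A.erase i) = insert j C := by ext; simp [C]; grind
  rw [h1, h2, h3]
  linarith

end

def bilinInterp (c₀₀ c₁₀ c₀₁ c₁₁ p q : ℝ) : ℝ :=
  (1 - q) * ((1 - p) * c₀₀ + p * c₁₀) + q * ((1 - p) * c₀₁ + p * c₁₁)

lemma convexOn_bilinInterp_antidiagonal {c₀₀ c₁₀ c₀₁ c₁₁ : ℝ} (h : c₁₁ + c₀₀ ≤ c₁₀ + c₀₁)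
    (p q : ℝ) : ConvexOn ℝ Set.univ fun ε => bilinInterp c₀₀ c₁₀ c₀₁ c₁₁ (p + ε) (q - ε) := by
  refine ⟨convex_univ, fun x _ y _ a b ha hb hab => ?_⟩
  obtain rfl : b = 1 - a := by linarith
  have gap : a * bilinInterp c₀₀ c₁₀ c₀₁ c₁₁ (p + x) (q - x) +
      (1 - a) * bilinInterp c₀₀ c₁₀ c₀₁ c₁₁ (p + y) (q - y) -
      bilinInterp c₀₀ c₁₀ c₀₁ c₁₁ (p + (a * x + (1 - a) * y)) (q - (a * x + (1 - a) * y)) =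
      (c₁₀ + c₀₁ - c₁₁ - c₀₀) * (a * (1 - a) * (x - y) ^ 2) := by
    simp only [bilinInterp]; ring
  have gap_nonneg : 0 ≤ (c₁₀ + c₀₁ - c₁₁ - c₀₀) * (a * (1 - a) * (x - y) ^ 2) :=
    mul_nonneg (by linarith) (mul_nonneg (mul_nonneg ha hb) (sq_nonneg _))
  simp only [smul_eq_mul]
  linarith

/-- In a pipage-rounding step moving `y` along `e_i − e_j`, the multilinear extension of
a submodular function, viewed as `φ(ε) = F(y + ε(e_i − e_j))`, is convex in `ε`; hence
its maximum over any interval is attained at an endpoint. -/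
theorem pipage_direction_convex {n : ℕ} (f : Finset (Fin n) → ℝ)
    (hsub : ∀ A B : Finset (Fin n), A ⊆ B → ∀ a ∉ B,
      f (insert a B) - f B ≤ f (insert a A) - f A)
    (y : Fin n → ℝ) (hy : ∀ k, y k ∈ Set.Icc (0 : ℝ) 1)
    (i j : Fin n) (hij : i ≠ j) :
    ConvexOn ℝ Set.univ
        (fun ε : ℝ => mlext f
          (fun k => y k + ε * ((if k = i then 1 else 0) - (if k = j then 1 else 0)))) ∧
      ∀ a b : ℝ, a ≤ b → ∀ ε ∈ Set.Icc a b,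
        mlext f (fun k => y k + ε * ((if k = i then 1 else 0) - (if k = j then 1 else 0)))
          ≤ max
            (mlext f (fun k => y k + a * ((if k = i then 1 else 0) - (if k = j then 1 else 0))))
            (mlext f (fun k => y k + b * ((if k = i then 1 else 0) - (if k = j then 1 else 0)))) := by
  have hpoint : ∀ ε : ℝ, (fun k => y k + ε * ((if k = i then 1 else 0) - (if k = j then 1 else 0)))
      = update (update y i (y i + ε)) j (y j - ε) := fun ε => by
    ext k
    by_cases hki : k = i <;> by_cases hkj : k = j <;> simp_all [update_of_ne, sub_eq_add_neg]
  have hφ : ∀ ε : ℝ, mlext f (update (update y i (y i + ε)) j (y j - ε)) =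
      bilinInterp (mlext (fun A => f ((A.erase i).erase j)) y)
        (mlext (fun A => f ((insert i A).erase j)) y)
        (mlext (fun A => f (insert j (A.erase i))) y)
        (mlext (fun A => f (insert j (insert i A))) y) (y i + ε) (y j - ε) := fun ε => by
    simp only [mlext_update, bilinInterp]
  have hsubmod := mlext_mono (fun A => submodular_pair_le hsub hij A) hy
  rw [mlext_add, mlext_add] at hsubmod
  have hconv := convexOn_bilinInterp_antidiagonal hsubmod (y i) (y j)
  simp only [← hφ, ← hpoint] at hconv
  refine ⟨hconv, fun a b hab ε hε => ?_⟩
  exact hconv.le_on_segment (Set.mem_univ a) (Set.mem_univ b) (by rwa [segment_eq_Icc hab])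
end
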